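/- Let N ≥ 1 be an integer, let 0 < L ≤ U be reals with κ = U/L, and let x_1, …, x_M ∈ ℝ^N (M ≥ 1) be vectors all of whose entries lie in [L, U]. Define w(p) = ln (max_{j ∈ {1,…,M}} f(x_j, p)) for nonzero real p, where f(x, p) = ((1/N)·∑_{i=1}^N x_i^p)^{1/p}. Then for all nonzero reals p < q ≤ 1, w(q) − w(p) ≤ (q − p)·κ·ln κ. -/

import Mathlib

open Real BigOperators Finset

/-- Generalized `p`-mean of a vector `x ∈ ℝ^N` for nonzero real exponent `p`. -/
noncomputable def pmean {N : ℕ} (x : Fin N → ℝ) (p : ℝ) : ℝ :=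
  ((1 / N : ℝ) * ∑ i, x i ^ p) ^ (1 / p)

/-! Write `a i = log (x i)` and let `K` be the cumulant generating function of `a` under the
uniform distribution on the coordinates, so that `log (pmean x t) = K t / t`. The second
derivative of `K` is the variance of `a` under an exponentially tilted distribution, hence at most
`(log κ / 2) ^ 2` by Popoviciu's inequality. So `(log κ) ^ 2 / 8 * t ^ 2 - K t` is convex, and its
secant slopes from `0`, namely `(log κ) ^ 2 / 8 * t - K t / t`, increase in `t` (across `0` too).
This bounds the increase of `log (pmean x ·)` by `(q - p) (log κ) ^ 2 / 8 ≤ (q - p) κ log κ`;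
for the maximum, compare with a vector attaining it at `q`. -/

open MeasureTheory ProbabilityTheory Set

section BoundedCgf

variable {Ω : Type*} [MeasurableSpace Ω] {μ : Measure Ω} {X : Ω → ℝ} {a b : ℝ}

lemma integrableExpSet_eq_univ_of_mem_Icc [IsFiniteMeasure μ] (hm : AEMeasurable X μ)
    (hb : ∀ᵐ ω ∂μ, X ω ∈ Icc a b) : integrableExpSet X μ = univ :=
  eq_univ_of_forall fun _ ↦ integrable_exp_mul_of_mem_Icc hm hb

variable [IsProbabilityMeasure μ]

lemma iteratedDeriv_two_cgf_le_of_mem_Icc (hm : AEMeasurable X μ)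
    (hb : ∀ᵐ ω ∂μ, X ω ∈ Icc a b) (t : ℝ) :
    iteratedDeriv 2 (cgf X μ) t ≤ ((b - a) / 2) ^ 2 := by
  have ht : t ∈ interior (integrableExpSet X μ) := by
    simp [integrableExpSet_eq_univ_of_mem_Icc hm hb]
  have := isProbabilityMeasure_tilted (integrable_exp_mul_of_mem_Icc (t := t) hm hb)
  rw [← variance_tilted_mul ht]
  exact variance_le_sq_of_bounded (tilted_absolutelyContinuous μ _ hb)
    (hm.mono_ac (tilted_absolutelyContinuous μ _))

lemma convexOn_mul_sq_sub_cgf_of_mem_Icc (hm : AEMeasurable X μ)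
    (hb : ∀ᵐ ω ∂μ, X ω ∈ Icc a b) :
    ConvexOn ℝ univ (fun t ↦ ((b - a) / 2) ^ 2 / 2 * t ^ 2 - cgf X μ t) := by
  have hcgf : ContDiff ℝ 2 (cgf X μ) := by
    refine AnalyticOnNhd.contDiff ?_
    simpa [integrableExpSet_eq_univ_of_mem_Icc hm hb] using analyticOnNhd_cgf (X := X) (μ := μ)
  have hd1 (t : ℝ) : HasDerivAt (cgf X μ) (iteratedDeriv 1 (cgf X μ) t) t := by
    rw [iteratedDeriv_one]
    exact (hcgf.differentiable (by norm_num) t).hasDerivAt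
  have hd2 (t : ℝ) :
      HasDerivAt (iteratedDeriv 1 (cgf X μ)) (iteratedDeriv 2 (cgf X μ) t) t := by
    have := (hcgf.differentiable_iteratedDeriv 1 (by norm_num) t).hasDerivAt
    rwa [← iteratedDeriv_succ] at this
  have hcont := hcgf.continuous
  refine convexOn_of_hasDerivWithinAt2_nonneg convex_univ
    (f' := fun t ↦ ((b - a) / 2) ^ 2 * t - iteratedDeriv 1 (cgf X μ) t)
    (f'' := fun t ↦ ((b - a) / 2) ^ 2 - iteratedDeriv 2 (cgf X μ) t)
    (by fun_prop) (fun t _ ↦ ?_) (fun t _ ↦ ?_) (fun t _ ↦ ?_)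
  · rw [interior_univ, hasDerivWithinAt_univ]
    convert ((hasDerivAt_pow 2 t).const_mul (((b - a) / 2) ^ 2 / 2)).fun_sub (hd1 t) using 1
    push_cast
    ring
  · rw [interior_univ, hasDerivWithinAt_univ]
    simpa using ((hasDerivAt_id t).const_mul (((b - a) / 2) ^ 2)).fun_sub (hd2 t)
  · exact sub_nonneg.2 (iteratedDeriv_two_cgf_le_of_mem_Icc hm hb t)

lemma cgf_div_sub_cgf_div_le_of_mem_Icc (hm : AEMeasurable X μ)
    (hb : ∀ᵐ ω ∂μ, X ω ∈ Icc a b) {p q : ℝ} (hp : p ≠ 0) (hq : q ≠ 0) (hpq : p ≤ q) :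
    cgf X μ q / q - cgf X μ p / p ≤ (q - p) * ((b - a) ^ 2 / 8) := by
  have h := (convexOn_mul_sq_sub_cgf_of_mem_Icc hm hb).secant_mono (mem_univ 0) (mem_univ p)
    (mem_univ q) hp hq hpq
  have hslope {t : ℝ} (ht : t ≠ 0) :
      (((b - a) / 2) ^ 2 / 2 * t ^ 2 - cgf X μ t - (((b - a) / 2) ^ 2 / 2 * 0 ^ 2 - cgf X μ 0))
        / (t - 0) = (b - a) ^ 2 / 8 * t - cgf X μ t / t := by
    rw [cgf_zero]
    field_simp
    ring
  rw [hslope hp, hslope hq] at h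
  linarith

end BoundedCgf

section PMean

variable {N : ℕ} [NeZero N] {x : Fin N → ℝ}

lemma pmean_pos (hx : ∀ i, 0 < x i) (t : ℝ) : 0 < pmean x t :=
  rpow_pos_of_pos (mul_pos (one_div_pos.2 (Nat.cast_pos.2 (NeZero.pos N)))
    (sum_pos (fun i _ ↦ rpow_pos_of_pos (hx i) t) univ_nonempty)) _

lemma log_pmean_eq_cgf_div (hx : ∀ i, 0 < x i) (t : ℝ) :
    log (pmean x t) =
      cgf (fun i ↦ log (x i)) (PMF.uniformOfFintype (Fin N)).toMeasure t / t := by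
  have hmgf : mgf (fun i ↦ log (x i)) (PMF.uniformOfFintype (Fin N)).toMeasure t
      = 1 / N * ∑ i, x i ^ t := by
    simp [mgf, PMF.integral_eq_sum, Finset.mul_sum, rpow_def_of_pos (hx _), mul_comm]
  rw [pmean, cgf, ← hmgf, log_rpow (mgf_pos Integrable.of_finite), one_div_mul_eq_div]

lemma log_pmean_sub_log_pmean_le {L U : ℝ} (hL : 0 < L) (hx : ∀ i, x i ∈ Icc L U) {p q : ℝ}
    (hp : p ≠ 0) (hq : q ≠ 0) (hpq : p ≤ q) :
    log (pmean x q) - log (pmean x p) ≤ (q - p) * (log (U / L) ^ 2 / 8) := by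
  have hxpos (i : Fin N) : 0 < x i := hL.trans_le (hx i).1
  have hU : 0 < U := (hxpos 0).trans_le (hx 0).2
  have hlog : ∀ᵐ i ∂(PMF.uniformOfFintype (Fin N)).toMeasure,
      log (x i) ∈ Icc (log L) (log U) :=
    ae_of_all _ fun i ↦ ⟨log_le_log hL (hx i).1, log_le_log (hxpos i) (hx i).2⟩
  rw [log_pmean_eq_cgf_div hxpos, log_pmean_eq_cgf_div hxpos, log_div hU.ne' hL.ne']
  exact cgf_div_sub_cgf_div_le_of_mem_Icc (measurable_of_finite _).aemeasurable hlog hp hq hpq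

end PMean

lemma sq_log_le_mul_log {κ : ℝ} (hκ : 1 ≤ κ) : log κ ^ 2 ≤ κ * log κ := by
  rw [sq]
  gcongr
  · exact log_nonneg hκ
  · linarith [log_le_sub_one_of_pos (zero_lt_one.trans_le hκ)]

theorem log_max_pmean_lipschitz_general {N M : ℕ} (hN : 1 ≤ N) (hM : 1 ≤ M)
    (L U : ℝ) (hL : 0 < L) (hLU : L ≤ U) (κ : ℝ) (hκ : κ = U / L)
    (x : Fin M → Fin N → ℝ) (hx : ∀ j i, x j i ∈ Set.Icc L U)
    (w : ℝ → ℝ)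
    (hw : ∀ p : ℝ, w p =
      Real.log (Finset.univ.sup' ⟨⟨0, hM⟩, Finset.mem_univ _⟩ fun j => pmean (x j) p))
    (p q : ℝ) (hp : p ≠ 0) (hq : q ≠ 0) (hpq : p < q) :
    w q - w p ≤ (q - p) * (κ * Real.log κ) := by
  have : NeZero N := ⟨by omega⟩
  obtain ⟨j, -, hj⟩ := exists_mem_eq_sup' ⟨⟨0, hM⟩, mem_univ _⟩ fun j ↦ pmean (x j) q
  have hwq : w q = log (pmean (x j) q) := by rw [hw, hj]
  have hwp : log (pmean (x j) p) ≤ w p := by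
    rw [hw]
    exact log_le_log (pmean_pos (fun i ↦ hL.trans_le (hx j i).1) p)
      (le_sup' (fun j ↦ pmean (x j) p) (mem_univ j))
  have hκ1 : 1 ≤ κ := hκ ▸ (one_le_div hL).2 hLU
  calc w q - w p ≤ log (pmean (x j) q) - log (pmean (x j) p) := by linarith
    _ ≤ (q - p) * (log κ ^ 2 / 8) := hκ ▸ log_pmean_sub_log_pmean_le hL (hx j) hp hq hpq.le
    _ ≤ (q - p) * (κ * log κ) := by
      gcongr
      linarith [sq_log_le_mul_log hκ1, sq_nonneg (log κ)]

/-- The log of the maximum `p`-mean value over a finite family of vectors with entries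
in `[L, U]` (with `0 < L ≤ U`, `κ = U/L`) is `(κ·ln κ)`-Lipschitz in the exponent:
`w(q) − w(p) ≤ (q − p)·κ·ln κ` for nonzero `p < q ≤ 1`. -/
theorem log_max_pmean_lipschitz {N M : ℕ} (hN : 1 ≤ N) (hM : 1 ≤ M)
    (L U : ℝ) (hL : 0 < L) (hLU : L ≤ U) (κ : ℝ) (hκ : κ = U / L)
    (x : Fin M → Fin N → ℝ) (hx : ∀ j i, x j i ∈ Set.Icc L U)
    (w : ℝ → ℝ)
    (hw : ∀ p : ℝ, w p =
      Real.log (Finset.univ.sup' ⟨⟨0, hM⟩, Finset.mem_univ _⟩ fun j => pmean (x j) p))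
    (p q : ℝ) (hp : p ≠ 0) (hq : q ≠ 0) (hpq : p < q) (hq1 : q ≤ 1) :
    w q - w p ≤ (q - p) * (κ * Real.log κ) :=
  log_max_pmean_lipschitz_general hN hM L U hL hLU κ hκ x hx w hw p q hp hq hpq
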